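/- The bases {uₙ = tⁿsⁿ, vₙ = tⁿsⁿ⁺¹} and {xₙ = tⁿsⁿ, yₙ = tⁿ⁺¹sⁿ} of K₂ over A are dual with respect to Res₂, in the sense that for all integers n, m: Res₂(uₙ·xₘ) = 0, Res₂(uₙ·y₋ₘ₋₁) = δₙₘ, Res₂(vₙ·x₋ₘ₋₁) = δₙₘ, and Res₂(vₙ·yₘ) = 0. -/

import Mathlib

noncomputable section

/-- `Q = ℂ((a))`, the field of Laurent series in the variable `a`. -/
abbrev QQ : Type := LaurentSeries ℂ

/-- The variable `a ∈ Q`. -/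
def aa : QQ := HahnSeries.single 1 1

/-- `Q((t))` (also serving as `Q((s))`): Laurent series over `Q`. -/
abbrev FF : Type := LaurentSeries QQ

/-- The Laurent-series variable of `FF`. -/
def TT : FF := HahnSeries.single 1 1

/-- The two-variable residue of the monomial `tⁱsʲ`: the coefficient of `t⁻¹` in the
`t`-expansion `tⁱ(t−a)ʲ ∈ Q((t))` plus the coefficient of `s⁻¹` in the `s`-expansion
`(s+a)ⁱsʲ ∈ Q((s))`. -/
def res2 (i j : ℤ) : QQ :=
  (TT ^ i * (TT - HahnSeries.C aa) ^ j).coeff (-1) +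
  ((TT + HahnSeries.C aa) ^ i * TT ^ j).coeff (-1)

lemma TT_def : TT = HahnSeries.single 1 1 := rfl

lemma aa_ne : aa ≠ 0 := HahnSeries.single_ne_zero one_ne_zero

lemma neg_aa_ne : -aa ≠ 0 := neg_ne_zero.mpr aa_ne

lemma neg_aa_inv : (-aa)⁻¹ = -(aa⁻¹) := by
  apply inv_eq_of_mul_eq_one_right
  have h : aa * aa⁻¹ = 1 := mul_inv_cancel₀ aa_ne
  ring_nf
  ring_nf at h
  exact h

lemma TT_zpow (i : ℤ) : TT ^ i = HahnSeries.single i 1 := by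
  rw [TT_def]
  exact (RatFunc.single_zpow i).symm

lemma single_mul_coeff (h : FF) (i n : ℤ) :
    (HahnSeries.single i (1 : QQ) * h).coeff n = h.coeff (n - i) := by
  have key := HahnSeries.coeff_single_mul_add (r := (1 : QQ)) (x := h) (a := n - i) (b := i)
  rw [one_mul] at key
  rw [sub_add_cancel] at key
  exact key

set_option synthInstance.maxHeartbeats 1000000 in
lemma res2_eq (i j : ℤ) :
    res2 i j = ((TT - HahnSeries.C aa) ^ j).coeff (-1 - i)
      + ((TT - HahnSeries.C (-aa)) ^ i).coeff (-1 - j) := by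
  rw [res2, TT_zpow i, single_mul_coeff,
    mul_comm ((TT + HahnSeries.C aa) ^ i) (TT ^ j), TT_zpow j, single_mul_coeff,
    map_neg, sub_neg_eq_add]

lemma ofPS_coeff_neg (x : PowerSeries QQ) {n : ℤ} (hn : n < 0) :
    (HahnSeries.ofPowerSeries ℤ QQ x).coeff n = 0 := by
  rw [HahnSeries.ofPowerSeries_apply, HahnSeries.embDomain_notin_range]
  rintro ⟨m, hm⟩
  have hm' : ((m : ℕ) : ℤ) = n := hm
  omega

lemma W_pow_coeff_neg (c : QQ) (k : ℕ) {n : ℤ} (hn : n < 0) :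
    ((TT - HahnSeries.C c) ^ k).coeff n = 0 := by
  have h : HahnSeries.ofPowerSeries ℤ QQ ((PowerSeries.X - PowerSeries.C (R := QQ) c) ^ k)
      = (TT - HahnSeries.C c) ^ k := by
    rw [map_pow, map_sub, HahnSeries.ofPowerSeries_X, HahnSeries.ofPowerSeries_C, TT_def]
  rw [← h, ofPS_coeff_neg _ hn]

lemma ps_key (c : QQ) (hc : c ≠ 0) (d : ℕ) :
    (PowerSeries.X - PowerSeries.C (R := QQ) c) ^ (d + 1) *
      (PowerSeries.mk fun n =>
        (Nat.choose (n + d) d : QQ) * (-(c⁻¹)) ^ (d + 1) * c⁻¹ ^ n) = 1 := by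
  have h0 : (1 - PowerSeries.X : PowerSeries QQ) ^ (d + 1) *
      (PowerSeries.mk fun n => (Nat.choose (d + n) d : QQ)) = 1 := by
    have := (PowerSeries.invOneSubPow QQ (d + 1)).inv_val
    rwa [PowerSeries.invOneSubPow_inv_eq_one_sub_pow,
      PowerSeries.invOneSubPow_val_succ_eq_mk_add_choose] at this
  have h1 := congrArg (PowerSeries.rescale c⁻¹) h0
  rw [map_mul, map_pow, map_sub, map_one, PowerSeries.rescale_X, PowerSeries.rescale_mk] at h1
  have hcc : PowerSeries.C (R := QQ) c * PowerSeries.C (R := QQ) c⁻¹ = 1 := by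
    rw [← map_mul, mul_inv_cancel₀ hc, map_one]
  have hX : PowerSeries.X - PowerSeries.C (R := QQ) c
      = (- PowerSeries.C (R := QQ) c) * (1 - PowerSeries.C (R := QQ) c⁻¹ * PowerSeries.X) := by
    linear_combination (-PowerSeries.X) * hcc
  have hM : (PowerSeries.mk fun n =>
        (Nat.choose (n + d) d : QQ) * (-(c⁻¹)) ^ (d + 1) * c⁻¹ ^ n)
      = PowerSeries.C (R := QQ) ((-(c⁻¹)) ^ (d + 1)) *
        PowerSeries.mk (fun n => c⁻¹ ^ n * (Nat.choose (d + n) d : QQ)) := by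
    ext n
    rw [PowerSeries.coeff_mk, PowerSeries.coeff_C_mul, PowerSeries.coeff_mk, add_comm n d]
    ring
  rw [hX, hM, mul_pow, mul_mul_mul_comm]
  have hAC : (- PowerSeries.C (R := QQ) c) ^ (d + 1) *
      PowerSeries.C (R := QQ) ((-(c⁻¹)) ^ (d + 1)) = 1 := by
    rw [← map_neg, ← map_pow, ← map_mul, ← mul_pow,
      show (-c) * (-(c⁻¹)) = 1 by linear_combination mul_inv_cancel₀ hc, one_pow, map_one]
  rw [hAC, h1, one_mul]

set_option maxHeartbeats 2000000 in
set_option synthInstance.maxHeartbeats 1000000 in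
lemma W_negSucc (c : QQ) (hc : c ≠ 0) (d : ℕ) (n : ℤ) :
    ((TT - HahnSeries.C c) ^ (Int.negSucc d)).coeff n =
      if 0 ≤ n then
        (Nat.choose (n.toNat + d) d : QQ) * (-(c⁻¹)) ^ (d + 1) * c⁻¹ ^ n.toNat
      else 0 := by
  have hOPS : HahnSeries.ofPowerSeries ℤ QQ (PowerSeries.X - PowerSeries.C (R := QQ) c)
      = TT - HahnSeries.C c := by
    rw [map_sub, HahnSeries.ofPowerSeries_X, HahnSeries.ofPowerSeries_C, TT_def]
  have key := congrArg (HahnSeries.ofPowerSeries ℤ QQ) (ps_key c hc d)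
  rw [map_mul, map_pow, map_one, hOPS] at key
  have hi := @inv_eq_of_mul_eq_one_right FF _ _ _ key
  rw [zpow_negSucc (TT - HahnSeries.C c) d, hi]
  split_ifs with hn
  · obtain ⟨m, rfl⟩ := Int.eq_ofNat_of_zero_le hn
    rw [HahnSeries.ofPowerSeries_apply_coeff, PowerSeries.coeff_mk, Int.toNat_natCast]
  · exact ofPS_coeff_neg _ (by omega)

lemma claim0 (k : ℤ) : res2 k k = 0 := by
  rw [res2_eq]
  rcases k with k | d
  · simp only [Int.ofNat_eq_natCast, zpow_natCast]
    rw [W_pow_coeff_neg _ _ (by omega : (-1 - (k : ℤ)) < 0),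
      W_pow_coeff_neg _ _ (by omega : (-1 - (k : ℤ)) < 0), add_zero]
  · have h1 : (-1 - (Int.negSucc d) : ℤ) = ((d : ℕ) : ℤ) := by
      rw [Int.negSucc_eq]; push_cast; ring
    rw [h1, W_negSucc aa aa_ne, W_negSucc (-aa) neg_aa_ne,
      if_pos (by positivity : (0 : ℤ) ≤ ((d : ℕ) : ℤ)),
      if_pos (by positivity : (0 : ℤ) ≤ ((d : ℕ) : ℤ)),
      Int.toNat_natCast, neg_aa_inv]
    ring

lemma claim1 (k : ℤ) : res2 k (k - 1) = if k = 0 then 1 else 0 := by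
  rw [res2_eq]
  rcases k with (_ | j) | d
  · simp only [Int.ofNat_eq_natCast, Nat.cast_zero]
    rw [show ((0 : ℤ) - 1) = Int.negSucc 0 by decide, W_negSucc aa aa_ne, zpow_zero,
      show ((-1 : ℤ) - Int.negSucc 0) = 0 by decide]
    norm_num [HahnSeries.coeff_one]
  · simp only [Int.ofNat_eq_natCast]
    rw [if_neg (by exact_mod_cast Nat.succ_ne_zero j : ((j + 1 : ℕ) : ℤ) ≠ 0)]
    have h1 : (((j + 1 : ℕ) : ℤ) - 1) = ((j : ℕ) : ℤ) := by push_cast; ring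
    rw [h1, zpow_natCast, zpow_natCast,
      W_pow_coeff_neg _ _ (by omega : (-1 - ((j + 1 : ℕ) : ℤ)) < 0),
      W_pow_coeff_neg _ _ (by omega : ((-1 : ℤ) - ((j : ℕ) : ℤ)) < 0), add_zero]
  · rw [if_neg ((Int.negSucc_lt_zero d).ne)]
    have h3 : ((-1 : ℤ) - ((Int.negSucc d : ℤ) - 1)) = (((d + 1 : ℕ)) : ℤ) := by
      rw [Int.negSucc_eq]; push_cast; ring
    have h2 : ((-1 : ℤ) - Int.negSucc d) = ((d : ℕ) : ℤ) := by
      rw [Int.negSucc_eq]; push_cast; ring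
    have h1 : ((Int.negSucc d : ℤ) - 1) = Int.negSucc (d + 1) := by
      rw [Int.negSucc_eq, Int.negSucc_eq]; push_cast; ring
    rw [h3, h2, h1, W_negSucc aa aa_ne, W_negSucc (-aa) neg_aa_ne,
      if_pos (by positivity : (0 : ℤ) ≤ ((d : ℕ) : ℤ)),
      if_pos (by positivity : (0 : ℤ) ≤ (((d + 1 : ℕ)) : ℤ)),
      Int.toNat_natCast, Int.toNat_natCast, neg_aa_inv]
    have hch : Nat.choose (d + (d + 1)) (d + 1) = Nat.choose (d + 1 + d) d := by
      have h := Nat.choose_symm (show d ≤ 2 * d + 1 by omega)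
      rw [show 2 * d + 1 - d = d + 1 by omega] at h
      rw [show d + (d + 1) = 2 * d + 1 by ring, show d + 1 + d = 2 * d + 1 by ring]
      exact h
    rw [hch]
    ring

lemma claim2 (k : ℤ) : res2 (k - 1) k = if k = 0 then 1 else 0 := by
  rw [res2_eq]
  rcases k with (_ | j) | d
  · simp only [Int.ofNat_eq_natCast, Nat.cast_zero]
    rw [show ((0 : ℤ) - 1) = Int.negSucc 0 by decide, W_negSucc (-aa) neg_aa_ne, zpow_zero,
      show ((-1 : ℤ) - Int.negSucc 0) = 0 by decide]
    norm_num [HahnSeries.coeff_one]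
  · simp only [Int.ofNat_eq_natCast]
    rw [if_neg (by exact_mod_cast Nat.succ_ne_zero j : ((j + 1 : ℕ) : ℤ) ≠ 0)]
    have h1 : (((j + 1 : ℕ) : ℤ) - 1) = ((j : ℕ) : ℤ) := by push_cast; ring
    rw [h1, zpow_natCast, zpow_natCast,
      W_pow_coeff_neg _ _ (by omega : ((-1 : ℤ) - ((j : ℕ) : ℤ)) < 0),
      W_pow_coeff_neg _ _ (by omega : (-1 - ((j + 1 : ℕ) : ℤ)) < 0), add_zero]
  · rw [if_neg ((Int.negSucc_lt_zero d).ne)]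
    have h3 : ((-1 : ℤ) - ((Int.negSucc d : ℤ) - 1)) = (((d + 1 : ℕ)) : ℤ) := by
      rw [Int.negSucc_eq]; push_cast; ring
    have h2 : ((-1 : ℤ) - Int.negSucc d) = ((d : ℕ) : ℤ) := by
      rw [Int.negSucc_eq]; push_cast; ring
    have h1 : ((Int.negSucc d : ℤ) - 1) = Int.negSucc (d + 1) := by
      rw [Int.negSucc_eq, Int.negSucc_eq]; push_cast; ring
    rw [h3, h2, h1, W_negSucc aa aa_ne, W_negSucc (-aa) neg_aa_ne,
      if_pos (by positivity : (0 : ℤ) ≤ (((d + 1 : ℕ)) : ℤ)),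
      if_pos (by positivity : (0 : ℤ) ≤ ((d : ℕ) : ℤ)),
      Int.toNat_natCast, Int.toNat_natCast, neg_aa_inv]
    have hch : Nat.choose (d + (d + 1)) (d + 1) = Nat.choose (d + 1 + d) d := by
      have h := Nat.choose_symm (show d ≤ 2 * d + 1 by omega)
      rw [show 2 * d + 1 - d = d + 1 by omega] at h
      rw [show d + (d + 1) = 2 * d + 1 by ring, show d + 1 + d = 2 * d + 1 by ring]
      exact h
    rw [hch]
    ring

/-- the bases `{uₙ = tⁿsⁿ, vₙ = tⁿsⁿ⁺¹}` and `{xₙ = tⁿsⁿ, yₙ = tⁿ⁺¹sⁿ}`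
are dual with respect to `Res₂`:
`Res₂(uₙxₘ) = 0`, `Res₂(uₙy₋ₘ₋₁) = δₙₘ`, `Res₂(vₙx₋ₘ₋₁) = δₙₘ`, `Res₂(vₙyₘ) = 0`.
Here `uₙ·xₘ = tⁿ⁺ᵐsⁿ⁺ᵐ`, `uₙ·y₋ₘ₋₁ = tⁿ⁻ᵐsⁿ⁻ᵐ⁻¹`, `vₙ·x₋ₘ₋₁ = tⁿ⁻ᵐ⁻¹sⁿ⁻ᵐ`,
`vₙ·yₘ = tⁿ⁺ᵐ⁺¹sⁿ⁺ᵐ⁺¹`. -/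
theorem stmt4 : ∀ n m : ℤ,
    res2 (n + m) (n + m) = 0 ∧
    res2 (n - m) (n - m - 1) = (if n = m then 1 else 0) ∧
    res2 (n - m - 1) (n - m) = (if n = m then 1 else 0) ∧
    res2 (n + m + 1) (n + m + 1) = 0 := by
  intro n m
  refine ⟨claim0 (n + m), ?_, ?_, claim0 (n + m + 1)⟩
  · rw [claim1 (n - m)]
    simp only [sub_eq_zero]
  · rw [claim2 (n - m)]
    simp only [sub_eq_zero]

end
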